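/- Convexity lower bound for the row- and column-wise loss (Eq. (6)): for all matrices M1, M2 ∈ ℝ^{n1×n2} with ‖M1‖_∞ ≤ α and ‖M2‖_∞ ≤ α, L(M1) − L(M2) ≥ tr( ∇L(M2)ᵀ (M1 − M2) ) + D_s²(M1 − M2). -/

import Mathlib

open scoped BigOperators Classical
open MeasureTheory ProbabilityTheory Matrix

noncomputable section

namespace NMC

/-- Real `n1 × n2` matrices. -/
abbrev Mat (n1 n2 : ℕ) := Matrix (Fin n1) (Fin n2) ℝ

variable {n1 n2 : ℕ}

/-- The pairwise pseudo-log-likelihood loss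
`l_{i1j1,i2j2}(m1,m2) = log(1 + exp(−(x1 − x2)(m1 − m2)))`. -/
def pl (x1 x2 m1 m2 : ℝ) : ℝ := Real.log (1 + Real.exp (-((x1 - x2) * (m1 - m2))))

/-- The row- and column-wise matrix U-statistic loss `L(M)`. -/
def lossL (X W M : Mat n1 n2) : ℝ :=
  (1 / (n2 : ℝ)) * ∑ i : Fin n1, ∑ j1 : Fin n2, ∑ j2 : Fin n2,
      W i j1 * W i j2 * pl (X i j1) (X i j2) (M i j1) (M i j2) +
  (1 / (n1 : ℝ)) * ∑ j : Fin n2, ∑ i1 : Fin n1, ∑ i2 : Fin n1,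
      W i1 j * W i2 j * pl (X i1 j) (X i2 j) (M i1 j) (M i2 j)

/-- Update a single entry of a matrix. -/
def updEntry (M : Mat n1 n2) (i : Fin n1) (j : Fin n2) (t : ℝ) : Mat n1 n2 :=
  fun i' j' => if i' = i ∧ j' = j then t else M i' j'

/-- The gradient matrix `∇L(M)`, whose `(i,j)` entry is the partial derivative
`∂L(M)/∂m_{ij}`. -/
def gradL (X W M : Mat n1 n2) : Mat n1 n2 :=
  fun i j => deriv (fun t => lossL X W (updEntry M i j t)) (M i j)

/-- Frobenius norm. -/
def frobNorm (A : Mat n1 n2) : ℝ := Real.sqrt (∑ i, ∑ j, A i j ^ 2)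

/-- Entrywise sup norm `‖A‖_∞ = max_{i,j} |a_{ij}|`. -/
def infNorm (A : Mat n1 n2) : ℝ := sSup (Set.range fun p : Fin n1 × Fin n2 => |A p.1 p.2|)

/-- The (unsorted) singular values of `A`: square roots of eigenvalues of `Aᴴ A`. -/
def svalsUnsorted (A : Mat n1 n2) : Fin n2 → ℝ :=
  fun k => Real.sqrt ((Matrix.isHermitian_conjTranspose_mul_self A).eigenvalues k)

/-- Nuclear norm `‖A‖_*`: sum of the singular values. -/
def nuclNorm (A : Mat n1 n2) : ℝ := ∑ k, svalsUnsorted A k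

/-- `sval A k` is the `k`-th largest singular value of `A` (1-indexed), `σ_k(A)`. -/
def sval (A : Mat n1 n2) (k : ℕ) : ℝ :=
  if h : 1 ≤ k ∧ k ≤ n2 then
    svalsUnsorted A (Tuple.sort (svalsUnsorted A) ⟨n2 - k, by omega⟩)
  else 0

/-- Spectral norm `‖A‖ = σ_1(A)`. -/
def specNorm (A : Mat n1 n2) : ℝ := sval A 1

/-- Tail sum of singular values `Σ_{k=r}^{n1 ∧ n2} σ_k(A)`. -/
def tailSum (A : Mat n1 n2) (r : ℕ) : ℝ := ∑ k ∈ Finset.Icc r (min n1 n2), sval A k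

/-- Mean of the entries of a matrix, `M_m(A) = 1ᵀ A 1/(n1 n2)`. -/
def matMean (A : Mat n1 n2) : ℝ := (∑ i, ∑ j, A i j) / ((n1 : ℝ) * (n2 : ℝ))

/-- `M ⊕ c = M + c 1 1ᵀ`. -/
def oplus (M : Mat n1 n2) (c : ℝ) : Mat n1 n2 := fun i j => M i j + c

/-- The weights `𝒲_{i1j1,i2j2}`. -/
def wgt (al : ℝ) (X W : Mat n1 n2) (i1 : Fin n1) (j1 : Fin n2) (i2 : Fin n1) (j2 : Fin n2) : ℝ :=
  W i1 j1 * W i2 j2 * (X i1 j1 - X i2 j2) ^ 2 /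
    (4 + 2 * Real.exp (2 * al * (X i1 j1 - X i2 j2)) +
      2 * Real.exp (2 * al * (X i2 j2 - X i1 j1)))

/-- The sample semi-norm squared `D_s²(M)`. -/
def Ds2 (al : ℝ) (X W M : Mat n1 n2) : ℝ :=
  (1 / (n2 : ℝ)) * ∑ i : Fin n1, ∑ j1 : Fin n2, ∑ j2 : Fin n2,
      (M i j1 - M i j2) ^ 2 * wgt al X W i j1 i j2 +
  (1 / (n1 : ℝ)) * ∑ j : Fin n2, ∑ i1 : Fin n1, ∑ i2 : Fin n1,
      (M i1 j - M i2 j) ^ 2 * wgt al X W i1 j i2 j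

/-- The population semi-norm squared `D²(M)` (all weights equal to 1). -/
def D2 (M : Mat n1 n2) : ℝ :=
  (1 / (n2 : ℝ)) * ∑ i : Fin n1, ∑ j1 : Fin n2, ∑ j2 : Fin n2, (M i j1 - M i j2) ^ 2 +
  (1 / (n1 : ℝ)) * ∑ j : Fin n2, ∑ i1 : Fin n1, ∑ i2 : Fin n1, (M i1 j - M i2 j) ^ 2

/-- `L_x`: squared range of the observed entries of `X`. -/
def Lx (X W : Mat n1 n2) : ℝ :=
  (sSup {x : ℝ | ∃ p : Fin n1 × Fin n2, W p.1 p.2 = 1 ∧ x = X p.1 p.2} -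
    sInf {x : ℝ | ∃ p : Fin n1 × Fin n2, W p.1 p.2 = 1 ∧ x = X p.1 p.2}) ^ 2

/-- `L_w = max_j (Σ_i W_{ij})/n1 + max_i (Σ_j W_{ij})/n2`. -/
def Lw (W : Mat n1 n2) : ℝ :=
  sSup (Set.range fun j : Fin n2 => ∑ i, W i j) / (n1 : ℝ) +
  sSup (Set.range fun i : Fin n1 => ∑ j, W i j) / (n2 : ℝ)

/-- `L_f = L_x L_w / 2`, the Lipschitz constant of `∇L`. -/
def Lf (X W : Mat n1 n2) : ℝ := Lx X W * Lw W / 2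

/-- The objective of the proximal problem defining `S_{lam,al}(A)`. -/
def proxObj (lam : ℝ) (A Y : Mat n1 n2) : ℝ := 1 / 2 * frobNorm (Y - A) ^ 2 + lam * nuclNorm Y

/-- `IsProx lam al A Y` states that `Y = S_{lam,al}(A)`, i.e. `Y` minimizes
`(1/2)‖Y − A‖_F² + lam ‖Y‖_*` over `{Y : ‖Y‖_∞ ≤ al}`. -/
def IsProx (lam al : ℝ) (A Y : Mat n1 n2) : Prop :=
  infNorm Y ≤ al ∧ ∀ Z : Mat n1 n2, infNorm Z ≤ al → proxObj lam A Y ≤ proxObj lam A Z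

/-- The penalized objective `F(M) = L(M) + lam ‖M‖_*`. -/
def objF (X W : Mat n1 n2) (lam : ℝ) (M : Mat n1 n2) : ℝ := lossL X W M + lam * nuclNorm M

/-- `Mh` is a minimizer of `L(M) + lam ‖M‖_*` over `{M : ‖M‖_∞ ≤ al}`. -/
def IsMin (X W : Mat n1 n2) (lam al : ℝ) (Mh : Mat n1 n2) : Prop :=
  infNorm Mh ≤ al ∧ ∀ M : Mat n1 n2, infNorm M ≤ al → objF X W lam Mh ≤ objF X W lam M

/-- `c` minimizes `c' ↦ ‖M ⊕ c'‖_*`; then `T(M) = M ⊕ c`. -/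
def IsMinShift (M : Mat n1 n2) (c : ℝ) : Prop :=
  ∀ c' : ℝ, nuclNorm (oplus M c) ≤ nuclNorm (oplus M c')

/-- `U` and `V` have as columns top-`r` left and right singular vectors of `A`. -/
def IsTopSVD (r : ℕ) (A : Mat n1 n2) (U : Matrix (Fin n1) (Fin r) ℝ)
    (V : Matrix (Fin n2) (Fin r) ℝ) : Prop :=
  Uᵀ * U = 1 ∧ Vᵀ * V = 1 ∧
  A * V = U * Matrix.diagonal (fun k : Fin r => sval A (k.1 + 1)) ∧
  Aᵀ * U = V * Matrix.diagonal (fun k : Fin r => sval A (k.1 + 1))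

/-- A choice of top-`r` left and right singular vector matrices of `A`. -/
def UVchoice (r : ℕ) (A : Mat n1 n2) :
    Matrix (Fin n1) (Fin r) ℝ × Matrix (Fin n2) (Fin r) ℝ :=
  if h : ∃ p : Matrix (Fin n1) (Fin r) ℝ × Matrix (Fin n2) (Fin r) ℝ,
      IsTopSVD r A p.1 p.2 then h.choose else (0, 0)

/-- `Θ2 = (I − UUᵀ)(Θ ⊖ M_m(Θ))(I − VVᵀ)`, with `U,V` top-`r` singular vectors of
`M* ⊕ M_m(Θ)`. -/
def theta2 (Mstar : Mat n1 n2) (r : ℕ) (Θ : Mat n1 n2) : Mat n1 n2 :=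
  (1 - (UVchoice r (oplus Mstar (matMean Θ))).1 * (UVchoice r (oplus Mstar (matMean Θ))).1ᵀ) *
    oplus Θ (-matMean Θ) *
  (1 - (UVchoice r (oplus Mstar (matMean Θ))).2 * (UVchoice r (oplus Mstar (matMean Θ))).2ᵀ)

/-- `Θ1 = Θ ⊖ M_m(Θ) − Θ2`. -/
def theta1 (Mstar : Mat n1 n2) (r : ℕ) (Θ : Mat n1 n2) : Mat n1 n2 :=
  oplus Θ (-matMean Θ) - theta2 Mstar r Θ

/-- The cone `C_r = {Θ : ‖Θ2‖_* ≤ 4 Σ_{k=r}^{n1∧n2} σ_k(M*) + 3‖Θ1‖_*}`. -/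
def coneC (Mstar : Mat n1 n2) (r : ℕ) : Set (Mat n1 n2) :=
  {Θ | nuclNorm (theta2 Mstar r Θ) ≤ 4 * tailSum Mstar r + 3 * nuclNorm (theta1 Mstar r Θ)}

/-- Euclidean norm of a vector. -/
def euclNorm {n : ℕ} (v : Fin n → ℝ) : ℝ := Real.sqrt (∑ i, v i ^ 2)

/-- The quantity `𝔅(M*)` of Theorem 4, computed from `T(M*) = M* ⊕ cstar`. -/
def Bconst (Mstar : Mat n1 n2) (cstar : ℝ) : ℝ :=
  euclNorm ((1 - (UVchoice (oplus Mstar cstar).rank (oplus Mstar cstar)).1 *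
        (UVchoice (oplus Mstar cstar).rank (oplus Mstar cstar)).1ᵀ).mulVec fun _ => (1 : ℝ)) *
    euclNorm ((1 - (UVchoice (oplus Mstar cstar).rank (oplus Mstar cstar)).2 *
        (UVchoice (oplus Mstar cstar).rank (oplus Mstar cstar)).2ᵀ).mulVec fun _ => (1 : ℝ)) /
      Real.sqrt ((n1 : ℝ) * (n2 : ℝ)) -
  Real.sqrt ((n1 : ℝ) * (n2 : ℝ)) *
    |matMean ((UVchoice (oplus Mstar cstar).rank (oplus Mstar cstar)).1 *
      (UVchoice (oplus Mstar cstar).rank (oplus Mstar cstar)).2ᵀ)|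

/-- The log-normalization function `b(m) = log ∫ exp(x m + f(x)) dν(x)`. -/
def bFun (ν : Measure ℝ) (f : ℝ → ℝ) (m : ℝ) : ℝ :=
  Real.log ((∫⁻ x, ENNReal.ofReal (Real.exp (x * m + f x)) ∂ν).toReal)

/-- The random variables `Z̃_{i1j1,i2j2}` of the conditional sub-Gaussian condition. -/
def Ztil {Ω : Type} (Mstar : Mat n1 n2) (X : Ω → Mat n1 n2)
    (i1 : Fin n1) (j1 : Fin n2) (i2 : Fin n1) (j2 : Fin n2) (ω : Ω) : ℝ :=
  (X ω i1 j1 - X ω i2 j2) /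
    (2 + Real.exp ((X ω i1 j1 - X ω i2 j2) * (Mstar i1 j1 - Mstar i2 j2)) +
      Real.exp (-((X ω i1 j1 - X ω i2 j2) * (Mstar i1 j1 - Mstar i2 j2))))

/-- `π_U = max_{i,j} P(W_{ij} = 1)`. -/
def piU {Ω : Type} [MeasurableSpace Ω] (P : Measure Ω) (W : Ω → Mat n1 n2) : ℝ :=
  sSup (Set.range fun p : Fin n1 × Fin n2 => (P {ω | W ω p.1 p.2 = 1}).toReal)

/-- `π_L = min_{i,j} P(W_{ij} = 1)`. -/
def piL {Ω : Type} [MeasurableSpace Ω] (P : Measure Ω) (W : Ω → Mat n1 n2) : ℝ :=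
  sInf (Set.range fun p : Fin n1 × Fin n2 => (P {ω | W ω p.1 p.2 = 1}).toReal)

/-- Rectangular diagonal matrix with diagonal entries `d 0, d 1, …`. -/
def rectDiag (n1 n2 : ℕ) (d : ℕ → ℝ) : Mat n1 n2 :=
  fun i j => if (i : ℕ) = (j : ℕ) then d (i : ℕ) else 0

/-! Every summand of `L` is `ℓ_d(u) = log (1 + exp (-d u))` evaluated at a difference
`u = m_p - m_q` of two entries, with `d = x_p - x_q`. Since `ℓ_d'' (u) = d² / (2 + 2 cosh (d u))`,
on `|u| ≤ 2α` the summand is strongly convex with modulus `d² / (2 + 2 cosh (2αd))`, and half of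
that modulus is the weight `𝒲`. The tangent-plus-quadratic lower bound therefore holds summand by
summand; summing it, the linear terms add up to `tr (∇L(M₂)ᵀ (M₁ - M₂))` and the quadratic ones to
`D_s²(M₁ - M₂)`. -/

lemma _root_.ConvexOn.add_mul_sub_le_of_hasDerivAt {S : Set ℝ} {f : ℝ → ℝ} {f' x y : ℝ}
    (hfc : ConvexOn ℝ S f) (hx : x ∈ S) (hy : y ∈ S) (hf : HasDerivAt f f' x) :
    f x + f' * (y - x) ≤ f y := by
  rcases lt_trichotomy x y with hxy | rfl | hyx
  · have := hfc.le_slope_of_hasDerivAt hx hy hxy hf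
    rw [slope_def_field, le_div_iff₀ (sub_pos.2 hxy)] at this
    linarith
  · simp
  · have := hfc.slope_le_of_hasDerivAt hy hx hyx hf
    rw [slope_def_field, div_le_iff₀ (sub_pos.2 hyx)] at this
    linarith

lemma add_deriv_mul_sub_add_sq_le_of_le_deriv2 {f f' f'' : ℝ → ℝ} {a b κ x y : ℝ}
    (hf : ∀ u, HasDerivAt f (f' u) u) (hf' : ∀ u, HasDerivAt f' (f'' u) u)
    (hκ : ∀ u ∈ Set.Icc a b, κ ≤ f'' u) (hx : x ∈ Set.Icc a b) (hy : y ∈ Set.Icc a b) :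
    f x + f' x * (y - x) + κ / 2 * (y - x) ^ 2 ≤ f y := by
  have hg : ∀ u, HasDerivAt (fun u => f u - κ / 2 * u ^ 2) (f' u - κ * u) u := fun u =>
    ((hf u).fun_sub ((hasDerivAt_pow 2 u).const_mul (κ / 2))).congr_deriv (by ring)
  have hg' : ∀ u, HasDerivAt (fun u => f' u - κ * u) (f'' u - κ) u := fun u =>
    ((hf' u).fun_sub ((hasDerivAt_id u).const_mul κ)).congr_deriv (by simp)
  have hconv : ConvexOn ℝ (Set.Icc a b) (fun u => f u - κ / 2 * u ^ 2) :=
    convexOn_of_hasDerivWithinAt2_nonneg (convex_Icc a b)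
      (fun u _ => (hg u).continuousAt.continuousWithinAt)
      (fun u _ => (hg u).hasDerivWithinAt) (fun u _ => (hg' u).hasDerivWithinAt)
      (fun u hu => sub_nonneg.2 (hκ u (interior_subset hu)))
  linear_combination hconv.add_mul_sub_le_of_hasDerivAt hx hy (hg x)

def logisticLoss (d u : ℝ) : ℝ := Real.log (1 + Real.exp (-(d * u)))

lemma hasDerivAt_logisticLoss (d u : ℝ) :
    HasDerivAt (logisticLoss d) (-d / (1 + Real.exp (d * u))) u := by
  refine ((((hasDerivAt_id' u).const_mul d).fun_neg.exp).const_add 1).log (by positivity)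
    |>.congr_deriv ?_
  rw [Real.exp_neg]
  field_simp
  ring

lemma hasDerivAt_logisticLoss_deriv (d u : ℝ) :
    HasDerivAt (fun u => -d / (1 + Real.exp (d * u))) (d ^ 2 / (2 + 2 * Real.cosh (d * u))) u := by
  refine ((hasDerivAt_const u (-d)).fun_div
    ((((hasDerivAt_id' u).const_mul d).exp).const_add 1) (by positivity)).congr_deriv ?_
  rw [Real.cosh_eq, Real.exp_neg]
  field_simp
  ring

lemma logisticLoss_add_deriv_mul_sub_add_sq_le {r d u v : ℝ} (hu : |u| ≤ r) (hv : |v| ≤ r) :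
    logisticLoss d v + -d / (1 + Real.exp (d * v)) * (u - v) +
      d ^ 2 / (4 + 4 * Real.cosh (r * d)) * (u - v) ^ 2 ≤ logisticLoss d u := by
  have hcurv : ∀ w ∈ Set.Icc (-r) r,
      d ^ 2 / (2 + 2 * Real.cosh (r * d)) ≤ d ^ 2 / (2 + 2 * Real.cosh (d * w)) := by
    intro w hw
    have hdw : |d * w| ≤ |r * d| := by
      rw [abs_mul, abs_mul, mul_comm |r|]
      exact mul_le_mul_of_nonneg_left ((abs_le.2 hw).trans (le_abs_self r)) (abs_nonneg d)
    gcongr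
    exact Real.cosh_le_cosh.2 hdw
  have key := add_deriv_mul_sub_add_sq_le_of_le_deriv2 (hasDerivAt_logisticLoss d)
    (hasDerivAt_logisticLoss_deriv d) hcurv (abs_le.1 hv) (abs_le.1 hu)
  convert key using 3
  field_simp
  ring

section PairSum

variable {ι : Type*} [Fintype ι]

def pairSum (φ : ι → ι → ℝ → ℝ) (m : ι → ℝ) : ℝ := ∑ p, ∑ q, φ p q (m p - m q)

variable [DecidableEq ι]

lemma hasDerivAt_pairSum_update {φ φ' : ι → ι → ℝ → ℝ}
    (hφ : ∀ p q u, HasDerivAt (φ p q) (φ' p q u) u) (m : ι → ℝ) (r : ι) :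
    HasDerivAt (fun t => pairSum φ (Function.update m r t))
      (∑ p, ∑ q, φ' p q (m p - m q) * ((Pi.single r 1 : ι → ℝ) p - (Pi.single r 1 : ι → ℝ) q))
      (m r) := by
  have hupd := hasDerivAt_pi.1 (hasDerivAt_update m r (m r))
  refine HasDerivAt.fun_sum fun p _ => HasDerivAt.fun_sum fun q _ => ?_
  exact (hφ p q (m p - m q)).comp_of_eq (m r) ((hupd p).fun_sub (hupd q)) (by simp)

lemma sum_pairDiff_mul (g : ι → ι → ℝ) (θ : ι → ℝ) :
    ∑ r, (∑ p, ∑ q, g p q * ((Pi.single r 1 : ι → ℝ) p - (Pi.single r 1 : ι → ℝ) q)) * θ r =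
      ∑ p, ∑ q, g p q * (θ p - θ q) := by
  calc _ = ∑ p, ∑ q, g p q *
        ∑ r, ((Pi.single r 1 : ι → ℝ) p - (Pi.single r 1 : ι → ℝ) q) * θ r := by
        simp only [Finset.sum_mul, Finset.mul_sum, mul_assoc]
        rw [Finset.sum_comm]
        exact Finset.sum_congr rfl fun p _ => Finset.sum_comm
    _ = _ := by simp [sub_mul, Finset.sum_sub_distrib, Pi.single_apply]

end PairSum

/-- Rewriting `L` and `D_s²` as single sums over pairs of entries `p, q`, the row part
contributes `1 / n2` when `p, q` share a row and the column part `1 / n1` when they share a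
column. -/
def rowColWeight (p q : Fin n1 × Fin n2) : ℝ :=
  (if p.1 = q.1 then 1 / (n2 : ℝ) else 0) + (if p.2 = q.2 then 1 / (n1 : ℝ) else 0)

lemma rowColWeight_nonneg (p q : Fin n1 × Fin n2) : 0 ≤ rowColWeight p q := by
  unfold rowColWeight
  split_ifs <;> positivity

lemma sum_rowPairs_add_sum_colPairs (f : Fin n1 × Fin n2 → Fin n1 × Fin n2 → ℝ) :
    (1 / (n2 : ℝ)) * ∑ i, ∑ j1, ∑ j2, f (i, j1) (i, j2) +
      (1 / (n1 : ℝ)) * ∑ j, ∑ i1, ∑ i2, f (i1, j) (i2, j) =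
      ∑ p, ∑ q, rowColWeight p q * f p q := by
  simp only [rowColWeight, add_mul, ite_mul, zero_mul, Finset.sum_add_distrib,
    Fintype.sum_prod_type, Finset.mul_sum]
  congr 1
  · simp [Finset.sum_ite_eq]
  · rw [Finset.sum_comm]
    simp [Finset.sum_ite_eq]

def lossKernel (X W : Mat n1 n2) (p q : Fin n1 × Fin n2) (u : ℝ) : ℝ :=
  rowColWeight p q * (W p.1 p.2 * W q.1 q.2 * logisticLoss (X p.1 p.2 - X q.1 q.2) u)

def lossKernelDeriv (X W : Mat n1 n2) (p q : Fin n1 × Fin n2) (u : ℝ) : ℝ :=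
  rowColWeight p q * (W p.1 p.2 * W q.1 q.2 *
    (-(X p.1 p.2 - X q.1 q.2) / (1 + Real.exp ((X p.1 p.2 - X q.1 q.2) * u))))

lemma hasDerivAt_lossKernel (X W : Mat n1 n2) (p q : Fin n1 × Fin n2) (u : ℝ) :
    HasDerivAt (lossKernel X W p q) (lossKernelDeriv X W p q u) u :=
  ((hasDerivAt_logisticLoss _ u).const_mul _).const_mul _

lemma lossL_eq_pairSum (X W M : Mat n1 n2) :
    lossL X W M = pairSum (lossKernel X W) (fun p => M p.1 p.2) :=
  sum_rowPairs_add_sum_colPairs fun p q =>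
    W p.1 p.2 * W q.1 q.2 * pl (X p.1 p.2) (X q.1 q.2) (M p.1 p.2) (M q.1 q.2)

lemma updEntry_apply_eq_update (M : Mat n1 n2) (i : Fin n1) (j : Fin n2) (t : ℝ) :
    (fun p : Fin n1 × Fin n2 => updEntry M i j t p.1 p.2) =
      Function.update (fun p => M p.1 p.2) (i, j) t := by
  ext ⟨i', j'⟩
  simp only [updEntry, Function.update_apply, Prod.mk.injEq]

lemma gradL_eq_sum (X W M : Mat n1 n2) (i : Fin n1) (j : Fin n2) :
    gradL X W M i j = ∑ p, ∑ q, lossKernelDeriv X W p q (M p.1 p.2 - M q.1 q.2) *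
      ((Pi.single (i, j) 1 : Fin n1 × Fin n2 → ℝ) p -
        (Pi.single (i, j) 1 : Fin n1 × Fin n2 → ℝ) q) := by
  simp only [gradL, lossL_eq_pairSum, updEntry_apply_eq_update]
  exact (hasDerivAt_pairSum_update (hasDerivAt_lossKernel X W) (fun p => M p.1 p.2) (i, j)).deriv

lemma trace_transpose_mul_eq_sum (A B : Mat n1 n2) :
    trace (Aᵀ * B) = ∑ p : Fin n1 × Fin n2, A p.1 p.2 * B p.1 p.2 := by
  simp only [Matrix.trace, Matrix.diag, Matrix.mul_apply, Matrix.transpose_apply,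
    Fintype.sum_prod_type]
  exact Finset.sum_comm

lemma trace_gradL_transpose_mul (X W M Θ : Mat n1 n2) :
    trace ((gradL X W M)ᵀ * Θ) = ∑ p, ∑ q, lossKernelDeriv X W p q (M p.1 p.2 - M q.1 q.2) *
      (Θ p.1 p.2 - Θ q.1 q.2) := by
  simp only [trace_transpose_mul_eq_sum, gradL_eq_sum]
  exact sum_pairDiff_mul _ fun p : Fin n1 × Fin n2 => Θ p.1 p.2

lemma Ds2_eq_sum (al : ℝ) (X W Θ : Mat n1 n2) :
    Ds2 al X W Θ = ∑ p, ∑ q, rowColWeight p q *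
      ((Θ p.1 p.2 - Θ q.1 q.2) ^ 2 * wgt al X W p.1 p.2 q.1 q.2) :=
  sum_rowPairs_add_sum_colPairs fun p q =>
    (Θ p.1 p.2 - Θ q.1 q.2) ^ 2 * wgt al X W p.1 p.2 q.1 q.2

lemma wgt_eq (al : ℝ) (X W : Mat n1 n2) (i1 : Fin n1) (j1 : Fin n2) (i2 : Fin n1) (j2 : Fin n2) :
    wgt al X W i1 j1 i2 j2 = W i1 j1 * W i2 j2 * ((X i1 j1 - X i2 j2) ^ 2 /
      (4 + 4 * Real.cosh (2 * al * (X i1 j1 - X i2 j2)))) := by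
  have hneg : 2 * al * (X i2 j2 - X i1 j1) = -(2 * al * (X i1 j1 - X i2 j2)) := by ring
  rw [wgt, hneg, Real.cosh_eq]
  ring

lemma lossKernelDeriv_mul_sub_add_le_sub {X W : Mat n1 n2} (hW : ∀ i j, 0 ≤ W i j)
    (al : ℝ) (p q : Fin n1 × Fin n2) {u v : ℝ} (hu : |u| ≤ 2 * al) (hv : |v| ≤ 2 * al) :
    lossKernelDeriv X W p q v * (u - v) +
        rowColWeight p q * ((u - v) ^ 2 * wgt al X W p.1 p.2 q.1 q.2) ≤
      lossKernel X W p q u - lossKernel X W p q v := by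
  have hc : 0 ≤ rowColWeight p q * (W p.1 p.2 * W q.1 q.2) :=
    mul_nonneg (rowColWeight_nonneg p q) (mul_nonneg (hW _ _) (hW _ _))
  have key := mul_le_mul_of_nonneg_left
    (logisticLoss_add_deriv_mul_sub_add_sq_le (d := X p.1 p.2 - X q.1 q.2) hu hv) hc
  rw [wgt_eq]
  unfold lossKernel lossKernelDeriv
  linear_combination key

lemma abs_sub_le_of_infNorm_le {M : Mat n1 n2} {al : ℝ} (hM : infNorm M ≤ al)
    (p q : Fin n1 × Fin n2) : |M p.1 p.2 - M q.1 q.2| ≤ 2 * al := by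
  have habs : ∀ p : Fin n1 × Fin n2, |M p.1 p.2| ≤ al := fun p =>
    (le_csSup (Set.finite_range _).bddAbove ⟨p, rfl⟩).trans hM
  linarith [abs_sub (M p.1 p.2) (M q.1 q.2), habs p, habs q]

theorem statement14_general (n1 n2 : ℕ) (al : ℝ)
    (X W : Mat n1 n2) (hW01 : ∀ i j, W i j = 0 ∨ W i j = 1)
    (M1 M2 : Mat n1 n2) (h1 : infNorm M1 ≤ al) (h2 : infNorm M2 ≤ al) :
    Matrix.trace ((gradL X W M2)ᵀ * (M1 - M2)) + Ds2 al X W (M1 - M2) ≤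
      lossL X W M1 - lossL X W M2 := by
  have hW : ∀ i j, 0 ≤ W i j := fun i j => by rcases hW01 i j with h | h <;> simp [h]
  rw [trace_gradL_transpose_mul, Ds2_eq_sum, lossL_eq_pairSum, lossL_eq_pairSum, pairSum,
    pairSum, ← Finset.sum_add_distrib, ← Finset.sum_sub_distrib]
  refine Finset.sum_le_sum fun p _ => ?_
  rw [← Finset.sum_add_distrib, ← Finset.sum_sub_distrib]
  refine Finset.sum_le_sum fun q _ => ?_
  have hdiff : (M1 - M2) p.1 p.2 - (M1 - M2) q.1 q.2 =
      (M1 p.1 p.2 - M1 q.1 q.2) - (M2 p.1 p.2 - M2 q.1 q.2) := by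
    simp only [Matrix.sub_apply]; ring
  rw [hdiff]
  exact lossKernelDeriv_mul_sub_add_le_sub hW al p q (abs_sub_le_of_infNorm_le h1 p q)
    (abs_sub_le_of_infNorm_le h2 p q)

theorem statement14 (n1 n2 : ℕ) (hn1 : 0 < n1) (hn2 : 0 < n2)
    (al : ℝ) (hal : 0 < al)
    (X W : Mat n1 n2) (hW01 : ∀ i j, W i j = 0 ∨ W i j = 1)
    (M1 M2 : Mat n1 n2) (h1 : infNorm M1 ≤ al) (h2 : infNorm M2 ≤ al) :
    Matrix.trace ((gradL X W M2)ᵀ * (M1 - M2)) + Ds2 al X W (M1 - M2) ≤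
      lossL X W M1 - lossL X W M2 :=
  statement14_general n1 n2 al X W hW01 M1 M2 h1 h2

end NMC
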